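/- arXiv:2204.05250 — 2 statements merged into one kernel-verified Lean document; each statement's English description precedes it below -/
import Mathlib

section
/- Let G be a connected bipartite graph on n ≥ 5 vertices with no twins of degree 2 or greater. Then γ^ID(G) ≤ min{(n + ℓ(G))/2, n − s(G)}, where ℓ(G) is the number of leaves and s(G) the number of support vertices. -/
/-!
Deleting one leaf of every support vertex leaves an identifying code of size `n - s`: in a
connected triangle-free graph, two vertices with the same trace would span a component of at most
four vertices. For a side `S` of the bipartition, take the non-leaves in `S` and all leaves,
except that each support vertex in `S` trades one of its leaves for a non-leaf neighbour; this has
at most `ℓ + |S \ L|` vertices, so the better side gives `(n + ℓ) / 2`. Twin freeness enters for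
two non-support non-leaves outside `S`, which see this code only through their open
neighbourhoods. The bound `n - s` is the smaller one unless `ℓ + 2s ≤ n`, and then every support
vertex has a non-leaf neighbour, as the second construction requires.
-/

open SimpleGraph

/-- The closed neighbourhood of a vertex. -/
def closedNbr {V : Type*} (G : SimpleGraph V) (v : V) : Set V := insert v (G.neighborSet v)

/-- `C` is an identifying code of `G`. -/
def IsIdCode {V : Type*} (G : SimpleGraph V) (C : Set V) : Prop :=
  (∀ v : V, (closedNbr G v ∩ C).Nonempty) ∧
  ∀ u v : V, closedNbr G u ∩ C = closedNbr G v ∩ C → u = v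

/-- A vertex of degree 1. -/
def IsLeaf {V : Type*} (G : SimpleGraph V) (v : V) : Prop := (G.neighborSet v).ncard = 1

/-- The set of leaves of `G`. -/
def leaves {V : Type*} (G : SimpleGraph V) : Set V := {v | IsLeaf G v}

/-- The set of support vertices of `G`. -/
def supports {V : Type*} (G : SimpleGraph V) : Set V := {v | ∃ u, IsLeaf G u ∧ G.Adj v u}

/-- `G` is identifiable: distinct vertices have distinct closed neighbourhoods. -/
def Identifiable {V : Type*} (G : SimpleGraph V) : Prop :=
  ∀ u v : V, closedNbr G u = closedNbr G v → u = v

/-- `G` is twin-free: no two distinct vertices share an open or closed neighbourhood. -/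
def TwinFree {V : Type*} (G : SimpleGraph V) : Prop :=
  ∀ u v : V, u ≠ v →
    G.neighborSet u ≠ G.neighborSet v ∧ closedNbr G u ≠ closedNbr G v

open Set

section

variable {V : Type*} {G : SimpleGraph V} {C : Set V} {u v w x y : V}

theorem self_mem_closedNbr (v : V) : v ∈ closedNbr G v := mem_insert v _

theorem mem_closedNbr_of_adj (h : G.Adj v x) : x ∈ closedNbr G v := mem_insert_of_mem v h

theorem closedNbr_inter_ne_of_mem (hxu : x ∈ closedNbr G u) (hxC : x ∈ C)
    (hxv : x ∉ closedNbr G v) : closedNbr G u ∩ C ≠ closedNbr G v ∩ C :=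
  fun h => hxv (h ▸ ⟨hxu, hxC⟩ : x ∈ closedNbr G v ∩ C).1

theorem closedNbr_inter_ne_of_not_adj (huC : u ∈ C) (huv : u ≠ v) (hvu : ¬G.Adj v u) :
    closedNbr G u ∩ C ≠ closedNbr G v ∩ C :=
  closedNbr_inter_ne_of_mem (self_mem_closedNbr u) huC fun h => h.elim huv hvu

theorem closedNbr_inter_eq_neighborSet (huC : u ∉ C) (hN : G.neighborSet u ⊆ C) :
    closedNbr G u ∩ C = G.neighborSet u := by
  rw [closedNbr, insert_inter_of_notMem huC, inter_eq_left.mpr hN]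

theorem IsLeaf.exists_adj (hv : IsLeaf G v) : ∃ w, G.Adj v w := by
  obtain ⟨a, ha⟩ := ncard_eq_one.mp hv
  exact ⟨a, (ha ▸ mem_singleton a : a ∈ G.neighborSet v)⟩

theorem IsLeaf.eq_of_adj (hv : IsLeaf G v) (hx : G.Adj v x) (hy : G.Adj v y) : x = y := by
  obtain ⟨a, ha⟩ := ncard_eq_one.mp hv
  have hx' : x ∈ G.neighborSet v := hx
  have hy' : y ∈ G.neighborSet v := hy
  rw [ha] at hx' hy'
  exact hx'.trans hy'.symm

theorem closedNbr_inter_ne_of_isLeaf_of_adj (hu : IsLeaf G u) (huv : G.Adj u v)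
    (hvx : G.Adj v x) (hxu : x ≠ u) (hxC : x ∈ C) :
    closedNbr G v ∩ C ≠ closedNbr G u ∩ C :=
  closedNbr_inter_ne_of_mem (mem_closedNbr_of_adj hvx) hxC fun hx =>
    hx.elim hxu fun hux => hvx.ne (hu.eq_of_adj huv hux)

theorem SimpleGraph.Connected.eq_univ_of_adj_closed (hconn : G.Connected) {T : Set V}
    (hv : v ∈ T) (hT : ∀ x ∈ T, ∀ y, G.Adj x y → y ∈ T) : T = univ := by
  refine eq_univ_of_forall fun y => ?_
  obtain ⟨p⟩ := hconn.preconnected v y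
  induction p with
  | nil => exact hv
  | cons h _ ih => exact ih (hT _ hv _ h)

theorem SimpleGraph.Connected.card_le_card_of_adj_closed [Fintype V] (hconn : G.Connected)
    {T : Finset V} (hv : v ∈ T) (hT : ∀ x ∈ T, ∀ y, G.Adj x y → y ∈ T) :
    Fintype.card V ≤ T.card := by
  rw [← Finset.card_univ,
    ← Finset.coe_eq_univ.mp (hconn.eq_univ_of_adj_closed (T := ↑T) hv hT)]

section Connected

variable [Fintype V]

theorem IsLeaf.not_adj_of_isLeaf (hconn : G.Connected) (hn : 3 ≤ Fintype.card V)
    (hu : IsLeaf G u) (hv : IsLeaf G v) : ¬G.Adj u v := by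
  classical
  intro huv
  have := hconn.card_le_card_of_adj_closed (Finset.mem_insert_self u {v}) (by
    simp only [Finset.mem_insert, Finset.mem_singleton]
    rintro x (rfl | rfl) y hy
    · exact Or.inr (hu.eq_of_adj hy huv)
    · exact Or.inl (hv.eq_of_adj hy huv.symm))
  have := Finset.card_le_two (a := u) (b := v)
  omega

theorem not_isLeaf_of_mem_supports (hconn : G.Connected) (hn : 3 ≤ Fintype.card V)
    (hw : w ∈ supports G) : ¬IsLeaf G w := by
  obtain ⟨u, hu, hwu⟩ := hw
  exact fun hw => hw.not_adj_of_isLeaf hconn hn hu hwu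

theorem one_lt_ncard_neighborSet (hconn : G.Connected) (hn : 2 ≤ Fintype.card V)
    (hv : ¬IsLeaf G v) : 1 < (G.neighborSet v).ncard := by
  have := Fintype.one_lt_card_iff_nontrivial.mp hn
  obtain ⟨u, hu⟩ := hconn.preconnected.exists_adj_of_nontrivial v
  have : 0 < (G.neighborSet v).ncard := nonempty_of_mem hu |>.ncard_pos
  have : (G.neighborSet v).ncard ≠ 1 := hv
  omega

theorem exists_adj_not_isLeaf (hconn : G.Connected)
    (hℓ : (leaves G).ncard + 1 < Fintype.card V) (w : V) : ∃ x, G.Adj w x ∧ ¬IsLeaf G x := by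
  by_contra! h
  have huniv : closedNbr G w = univ := by
    refine hconn.eq_univ_of_adj_closed (self_mem_closedNbr w) ?_
    rintro x (rfl | hx) y hy
    · exact Or.inr hy
    · exact Or.inl ((h x hx).eq_of_adj hy hx.symm)
  have hsub : closedNbr G w ⊆ insert w (leaves G) := insert_subset_insert fun x hx => h x hx
  have := (ncard_le_ncard hsub).trans (ncard_insert_le w (leaves G))
  rw [huniv, ncard_univ, Nat.card_eq_fintype_card] at this
  omega

end Connected

open Classical in
noncomputable def leafOf (G : SimpleGraph V) (w : V) : V :=
  if h : ∃ u, IsLeaf G u ∧ G.Adj w u then h.choose else w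

theorem leafOf_spec (hw : w ∈ supports G) : IsLeaf G (leafOf G w) ∧ G.Adj w (leafOf G w) := by
  have h : ∃ u, IsLeaf G u ∧ G.Adj w u := hw
  rw [leafOf, dif_pos h]
  exact h.choose_spec

theorem isLeaf_leafOf (hw : w ∈ supports G) : IsLeaf G (leafOf G w) := (leafOf_spec hw).1

theorem adj_leafOf (hw : w ∈ supports G) : G.Adj w (leafOf G w) := (leafOf_spec hw).2

theorem eq_of_adj_leafOf (hw : w ∈ supports G) (h : G.Adj v (leafOf G w)) : v = w :=
  (isLeaf_leafOf hw).eq_of_adj h.symm (adj_leafOf hw).symm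

theorem leafOf_injOn : InjOn (leafOf G) (supports G) := fun _ hw _ hw' h =>
  eq_of_adj_leafOf hw' (h ▸ adj_leafOf hw)

theorem eq_leafOf_of_adj (hy : y ∈ leafOf G '' supports G) (hvy : G.Adj v y) :
    y = leafOf G v := by
  obtain ⟨w, hw, rfl⟩ := hy
  rw [eq_of_adj_leafOf hw hvy]

theorem closedNbr_inter_leafOf_ne {w' : V} (hw : w ∈ supports G) (hw' : w' ∈ supports G)
    (hwl : ¬IsLeaf G w) (hwC : w ∈ C) (hne : w ≠ w') :
    closedNbr G (leafOf G w) ∩ C ≠ closedNbr G (leafOf G w') ∩ C :=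
  closedNbr_inter_ne_of_mem (mem_closedNbr_of_adj (adj_leafOf hw).symm) hwC fun h =>
    h.elim (fun h => hwl (h ▸ isLeaf_leafOf hw')) fun h => hne (eq_of_adj_leafOf hw' h.symm)

open Classical in
noncomputable def nonLeafNbr (G : SimpleGraph V) (w : V) : V :=
  if h : ∃ x, G.Adj w x ∧ ¬IsLeaf G x then h.choose else w

theorem nonLeafNbr_spec (h : ∃ x, G.Adj w x ∧ ¬IsLeaf G x) :
    G.Adj w (nonLeafNbr G w) ∧ ¬IsLeaf G (nonLeafNbr G w) := by
  rw [nonLeafNbr, dif_pos h]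
  exact h.choose_spec

noncomputable def omitLeafCode (G : SimpleGraph V) : Set V := (leafOf G '' supports G)ᶜ

theorem mem_omitLeafCode_of_not_isLeaf (hv : ¬IsLeaf G v) : v ∈ omitLeafCode G :=
  fun ⟨_, hw, hwv⟩ => hv (hwv ▸ isLeaf_leafOf hw)

theorem mem_leafOf_image_of_closedNbr_inter_eq (htri : G.CliqueFree 3) (huv : G.Adj u v)
    (h : closedNbr G u ∩ omitLeafCode G = closedNbr G v ∩ omitLeafCode G)
    (huy : G.Adj u y) (hyv : y ≠ v) : y ∈ leafOf G '' supports G := by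
  classical
  by_contra hyC
  have hy : y ∈ closedNbr G v ∩ omitLeafCode G := h ▸ ⟨mem_closedNbr_of_adj huy, hyC⟩
  exact hy.1.elim hyv fun hvy => htri {u, v, y} (is3Clique_triple_iff.mpr ⟨huv, huy, hvy⟩)

section OmitLeafCode

variable [Fintype V]

theorem exists_adj_mem_omitLeafCode (hconn : G.Connected) (hn : 4 ≤ Fintype.card V)
    (hu : IsLeaf G u) (huv : G.Adj u v) :
    ∃ x, G.Adj v x ∧ x ≠ u ∧ x ∈ omitLeafCode G := by
  classical
  have hv : v ∈ supports G := ⟨u, hu, huv.symm⟩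
  by_contra! h
  have := hconn.card_le_card_of_adj_closed (T := {v, u, leafOf G v})
    (Finset.mem_insert_self _ _) (by
    simp only [Finset.mem_insert, Finset.mem_singleton]
    rintro x (rfl | rfl | rfl) y hy
    · by_cases hyu : y = u
      · exact Or.inr (Or.inl hyu)
      · exact Or.inr (Or.inr (eq_leafOf_of_adj (not_not.mp (h y hy hyu)) hy))
    · exact Or.inl (hu.eq_of_adj hy huv)
    · exact Or.inl (eq_of_adj_leafOf hv hy.symm))
  have := Finset.card_le_three (a := v) (b := u) (c := leafOf G v)
  omega

theorem closedNbr_inter_omitLeafCode_ne_of_adj (hconn : G.Connected)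
    (hn : 5 ≤ Fintype.card V) (htri : G.CliqueFree 3) (huv : G.Adj u v) (hu : ¬IsLeaf G u)
    (hv : ¬IsLeaf G v) :
    closedNbr G u ∩ omitLeafCode G ≠ closedNbr G v ∩ omitLeafCode G := by
  classical
  intro h
  have hnbrs : ∀ {a b}, G.Adj a b → ¬IsLeaf G a →
      closedNbr G a ∩ omitLeafCode G = closedNbr G b ∩ omitLeafCode G →
      a ∈ supports G ∧ ∀ y, G.Adj a y → y = b ∨ y = leafOf G a := by
    intro a b hab ha h
    obtain ⟨y, hay, hyb⟩ :=
      exists_ne_of_one_lt_ncard (one_lt_ncard_neighborSet hconn (by omega) ha) b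
    obtain ⟨w, hw, rfl⟩ := mem_leafOf_image_of_closedNbr_inter_eq htri hab h hay hyb
    refine ⟨eq_of_adj_leafOf hw hay ▸ hw, fun z haz => or_iff_not_imp_left.mpr fun hzb =>
      eq_leafOf_of_adj (mem_leafOf_image_of_closedNbr_inter_eq htri hab h haz hzb) haz⟩
  obtain ⟨hus, hu'⟩ := hnbrs huv hu h
  obtain ⟨hvs, hv'⟩ := hnbrs huv.symm hv h.symm
  have := hconn.card_le_card_of_adj_closed (T := {u, v, leafOf G u, leafOf G v})
    (Finset.mem_insert_self _ _) (by
    simp only [Finset.mem_insert, Finset.mem_singleton]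
    rintro x (rfl | rfl | rfl | rfl) y hy
    · rcases hu' y hy with rfl | rfl <;> simp
    · rcases hv' y hy with rfl | rfl <;> simp
    · exact Or.inl (eq_of_adj_leafOf hus hy.symm)
    · exact Or.inr (Or.inl (eq_of_adj_leafOf hvs hy.symm)))
  have := Finset.card_le_four (a := u) (b := v) (c := leafOf G u) (d := leafOf G v)
  omega

theorem isIdCode_omitLeafCode (hconn : G.Connected) (hn : 5 ≤ Fintype.card V)
    (htri : G.CliqueFree 3) : IsIdCode G (omitLeafCode G) := by
  have hsup : ∀ {w}, w ∈ supports G → w ∈ omitLeafCode G := fun hw =>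
    mem_omitLeafCode_of_not_isLeaf (not_isLeaf_of_mem_supports hconn (by omega) hw)
  refine ⟨fun v => ?_, fun u v h => by_contra fun hne => ?_⟩
  · by_cases hv : IsLeaf G v
    · obtain ⟨w, hvw⟩ := hv.exists_adj
      exact ⟨w, mem_closedNbr_of_adj hvw, hsup ⟨v, hv, hvw.symm⟩⟩
    · exact ⟨v, self_mem_closedNbr v, mem_omitLeafCode_of_not_isLeaf hv⟩
  by_cases huv : G.Adj u v
  · by_cases hu : IsLeaf G u
    · obtain ⟨x, hvx, hxu, hxC⟩ := exists_adj_mem_omitLeafCode hconn (by omega) hu huv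
      exact closedNbr_inter_ne_of_isLeaf_of_adj hu huv hvx hxu hxC h.symm
    by_cases hv : IsLeaf G v
    · obtain ⟨x, hux, hxv, hxC⟩ := exists_adj_mem_omitLeafCode hconn (by omega) hv huv.symm
      exact closedNbr_inter_ne_of_isLeaf_of_adj hv huv.symm hux hxv hxC h
    exact closedNbr_inter_omitLeafCode_ne_of_adj hconn hn htri huv hu hv h
  by_cases huC : u ∈ omitLeafCode G
  · exact closedNbr_inter_ne_of_not_adj huC hne (fun hvu => huv hvu.symm) h
  by_cases hvC : v ∈ omitLeafCode G
  · exact closedNbr_inter_ne_of_not_adj hvC (Ne.symm hne) huv h.symm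
  obtain ⟨w, hw, rfl⟩ := not_not.mp huC
  obtain ⟨w', hw', rfl⟩ := not_not.mp hvC
  exact closedNbr_inter_leafOf_ne hw hw' (not_isLeaf_of_mem_supports hconn (by omega) hw) (hsup hw)
    (fun hww => hne (hww ▸ rfl)) h

theorem ncard_omitLeafCode_add_ncard_supports :
    (omitLeafCode G).ncard + (supports G).ncard = Fintype.card V := by
  rw [← leafOf_injOn.ncard_image, add_comm, omitLeafCode, ncard_add_ncard_compl,
    Nat.card_eq_fintype_card]

end OmitLeafCode

noncomputable def bipartiteCode (G : SimpleGraph V) (s : Set V) : Set V :=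
  (leaves G)ᶜ ∩ s ∪ (leaves G \ leafOf G '' (supports G ∩ s)) ∪
    nonLeafNbr G '' (supports G ∩ s)

section BipartiteCode

variable {s : Set V}

theorem mem_bipartiteCode_of_not_isLeaf (hv : ¬IsLeaf G v) (hvs : v ∈ s) :
    v ∈ bipartiteCode G s :=
  Or.inl (Or.inl ⟨hv, hvs⟩)

theorem leafOf_mem_bipartiteCode (hw : w ∈ supports G) (hws : w ∉ s) :
    leafOf G w ∈ bipartiteCode G s :=
  Or.inl (Or.inr ⟨isLeaf_leafOf hw, fun ⟨_, hw', h⟩ =>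
    hws (leafOf_injOn hw'.1 hw h ▸ hw'.2)⟩)

theorem nonLeafNbr_mem_bipartiteCode (hs : G.IsBipartiteWith s sᶜ)
    (hstar : ∃ x, G.Adj w x ∧ ¬IsLeaf G x) (hw : w ∈ supports G) :
    nonLeafNbr G w ∈ bipartiteCode G s := by
  by_cases hws : w ∈ s
  · exact Or.inr ⟨w, ⟨hw, hws⟩, rfl⟩
  · exact mem_bipartiteCode_of_not_isLeaf (nonLeafNbr_spec hstar).2
      (hs.mem_of_mem_adj' hws (nonLeafNbr_spec hstar).1.symm)

theorem mem_bipartiteCode_of_adj (hs : G.IsBipartiteWith s sᶜ) (hv : v ∉ supports G)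
    (hvs : v ∉ s) (hvx : G.Adj v x) : x ∈ bipartiteCode G s :=
  mem_bipartiteCode_of_not_isLeaf (fun hx => hv ⟨x, hx, hvx⟩) (hs.mem_of_mem_adj' hvs hvx.symm)

theorem closedNbr_inter_bipartiteCode_ne_of_isLeaf (hs : G.IsBipartiteWith s sᶜ)
    (hstar : ∃ x, G.Adj v x ∧ ¬IsLeaf G x) (hu : IsLeaf G u) (huv : G.Adj u v) :
    closedNbr G v ∩ bipartiteCode G s ≠ closedNbr G u ∩ bipartiteCode G s :=
  closedNbr_inter_ne_of_isLeaf_of_adj hu huv (nonLeafNbr_spec hstar).1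
    (fun h => (nonLeafNbr_spec hstar).2 (h ▸ hu))
    (nonLeafNbr_mem_bipartiteCode hs hstar ⟨u, hu, huv.symm⟩)

theorem mem_leafOf_image_of_not_mem_bipartiteCode (hv : IsLeaf G v)
    (hvC : v ∉ bipartiteCode G s) : v ∈ leafOf G '' (supports G ∩ s) :=
  not_not.mp fun h => hvC (Or.inl (Or.inr ⟨hv, h⟩))

theorem closedNbr_inter_bipartiteCode_ne_of_mem_supports (hs : G.IsBipartiteWith s sᶜ)
    (hstar : ∃ x, G.Adj u x ∧ ¬IsLeaf G x) (hu : u ∈ supports G) (hus : u ∉ s)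
    (hvu : v ≠ u) :
    closedNbr G u ∩ bipartiteCode G s ≠ closedNbr G v ∩ bipartiteCode G s := by
  by_cases hv : v = leafOf G u
  · exact hv ▸ closedNbr_inter_bipartiteCode_ne_of_isLeaf hs hstar (isLeaf_leafOf hu)
      (adj_leafOf hu).symm
  · exact closedNbr_inter_ne_of_mem (mem_closedNbr_of_adj (adj_leafOf hu))
      (leafOf_mem_bipartiteCode hu hus) fun h => h.elim (fun h => hv h.symm)
        fun h => hvu (eq_of_adj_leafOf hu h)

theorem closedNbr_inter_bipartiteCode_ne_of_not_mem_supports [Fintype V] (hconn : G.Connected)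
    (hn : 2 ≤ Fintype.card V) (hs : G.IsBipartiteWith s sᶜ) (hu : ¬IsLeaf G u)
    (huS : u ∉ supports G) (hus : u ∉ s)
    (hy : ∀ x, G.Adj u x → x ∈ closedNbr G v → x = y) :
    closedNbr G u ∩ bipartiteCode G s ≠ closedNbr G v ∩ bipartiteCode G s := by
  obtain ⟨x, hux, hxy⟩ := exists_ne_of_one_lt_ncard (one_lt_ncard_neighborSet hconn hn hu) y
  exact closedNbr_inter_ne_of_mem (mem_closedNbr_of_adj hux)
    (mem_bipartiteCode_of_adj hs huS hus hux)
    fun hx => hxy (hy x hux hx)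

section Finite

variable [Fintype V]

theorem closedNbr_inter_bipartiteCode_ne_of_adj (hconn : G.Connected)
    (hn : 2 ≤ Fintype.card V) (hs : G.IsBipartiteWith s sᶜ)
    (hstar : ∀ w ∈ supports G, ∃ x, G.Adj w x ∧ ¬IsLeaf G x) (huv : G.Adj u v)
    (hus : u ∉ s) :
    closedNbr G u ∩ bipartiteCode G s ≠ closedNbr G v ∩ bipartiteCode G s := by
  have hvs : v ∈ s := hs.mem_of_mem_adj' hus huv.symm
  by_cases hu : IsLeaf G u
  · exact (closedNbr_inter_bipartiteCode_ne_of_isLeaf hs (hstar v ⟨u, hu, huv.symm⟩) hu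
      huv).symm
  by_cases huS : u ∈ supports G
  · exact closedNbr_inter_bipartiteCode_ne_of_mem_supports hs (hstar u huS) huS hus huv.ne'
  refine closedNbr_inter_bipartiteCode_ne_of_not_mem_supports hconn hn hs hu huS hus
    fun x hux hx => hx.elim id fun hvx => ?_
  exact (hs.mem_of_mem_adj hvs hvx (hs.mem_of_mem_adj' hus hux.symm)).elim

theorem closedNbr_inter_bipartiteCode_ne_of_not_mem (hconn : G.Connected)
    (hn : 2 ≤ Fintype.card V) (hs : G.IsBipartiteWith s sᶜ)
    (htwin : ∀ u v : V, u ≠ v → 2 ≤ (G.neighborSet u).ncard →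
      2 ≤ (G.neighborSet v).ncard → G.neighborSet u ≠ G.neighborSet v)
    (hstar : ∀ w ∈ supports G, ∃ x, G.Adj w x ∧ ¬IsLeaf G x) (hne : u ≠ v)
    (huv : ¬G.Adj u v) (hu : ¬IsLeaf G u) (huC : u ∉ bipartiteCode G s)
    (hvC : v ∉ bipartiteCode G s) :
    closedNbr G u ∩ bipartiteCode G s ≠ closedNbr G v ∩ bipartiteCode G s := by
  have hus : u ∉ s := fun hus => huC (mem_bipartiteCode_of_not_isLeaf hu hus)
  by_cases huS : u ∈ supports G
  · exact closedNbr_inter_bipartiteCode_ne_of_mem_supports hs (hstar u huS) huS hus hne.symm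
  by_cases hv : IsLeaf G v
  · obtain ⟨w, hw, rfl⟩ := mem_leafOf_image_of_not_mem_bipartiteCode hv hvC
    exact closedNbr_inter_bipartiteCode_ne_of_not_mem_supports hconn hn hs hu huS hus
      fun x hux hx => hx.elim (fun hxv => absurd (hxv ▸ hux) huv)
        fun h => eq_of_adj_leafOf hw.1 h.symm
  have hvs : v ∉ s := fun hvs => hvC (mem_bipartiteCode_of_not_isLeaf hv hvs)
  by_cases hvS : v ∈ supports G
  · exact (closedNbr_inter_bipartiteCode_ne_of_mem_supports hs (hstar v hvS) hvS hvs hne).symm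
  rw [closedNbr_inter_eq_neighborSet huC fun _ => mem_bipartiteCode_of_adj hs huS hus,
    closedNbr_inter_eq_neighborSet hvC fun _ => mem_bipartiteCode_of_adj hs hvS hvs]
  exact htwin u v hne (one_lt_ncard_neighborSet hconn hn hu) (one_lt_ncard_neighborSet hconn hn hv)

theorem isIdCode_bipartiteCode (hconn : G.Connected) (hn : 3 ≤ Fintype.card V)
    (hs : G.IsBipartiteWith s sᶜ)
    (htwin : ∀ u v : V, u ≠ v → 2 ≤ (G.neighborSet u).ncard →
      2 ≤ (G.neighborSet v).ncard → G.neighborSet u ≠ G.neighborSet v)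
    (hstar : ∀ w ∈ supports G, ∃ x, G.Adj w x ∧ ¬IsLeaf G x) :
    IsIdCode G (bipartiteCode G s) := by
  refine ⟨fun v => ?_, fun u v h => by_contra fun hne => ?_⟩
  · by_cases hvC : v ∈ bipartiteCode G s
    · exact ⟨v, self_mem_closedNbr v, hvC⟩
    by_cases hv : IsLeaf G v
    · obtain ⟨w, hw, rfl⟩ := mem_leafOf_image_of_not_mem_bipartiteCode hv hvC
      exact ⟨w, mem_closedNbr_of_adj (adj_leafOf hw.1).symm, mem_bipartiteCode_of_not_isLeaf
        (not_isLeaf_of_mem_supports hconn hn hw.1) hw.2⟩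
    have hvs : v ∉ s := fun hvs => hvC (mem_bipartiteCode_of_not_isLeaf hv hvs)
    by_cases hvS : v ∈ supports G
    · exact ⟨_, mem_closedNbr_of_adj (nonLeafNbr_spec (hstar v hvS)).1,
        nonLeafNbr_mem_bipartiteCode hs (hstar v hvS) hvS⟩
    obtain ⟨x, hvx, -⟩ :=
      exists_ne_of_one_lt_ncard (one_lt_ncard_neighborSet hconn (by omega) hv) v
    exact ⟨x, mem_closedNbr_of_adj hvx, mem_bipartiteCode_of_adj hs hvS hvs hvx⟩
  by_cases huv : G.Adj u v
  · rcases hs.mem_of_adj huv with ⟨-, hvs⟩ | ⟨hus, -⟩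
    · exact closedNbr_inter_bipartiteCode_ne_of_adj hconn (by omega) hs hstar huv.symm hvs h.symm
    · exact closedNbr_inter_bipartiteCode_ne_of_adj hconn (by omega) hs hstar huv hus h
  by_cases huC : u ∈ bipartiteCode G s
  · exact closedNbr_inter_ne_of_not_adj huC hne (fun hvu => huv hvu.symm) h
  by_cases hvC : v ∈ bipartiteCode G s
  · exact closedNbr_inter_ne_of_not_adj hvC (Ne.symm hne) huv h.symm
  by_cases hu : IsLeaf G u
  · by_cases hv : IsLeaf G v
    · obtain ⟨w, hw, rfl⟩ := mem_leafOf_image_of_not_mem_bipartiteCode hu huC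
      obtain ⟨w', hw', rfl⟩ := mem_leafOf_image_of_not_mem_bipartiteCode hv hvC
      have hwl := not_isLeaf_of_mem_supports hconn hn hw.1
      exact closedNbr_inter_leafOf_ne hw.1 hw'.1 hwl (mem_bipartiteCode_of_not_isLeaf hwl hw.2)
        (fun hww => hne (hww ▸ rfl)) h
    · exact closedNbr_inter_bipartiteCode_ne_of_not_mem hconn (by omega) hs htwin hstar
        (Ne.symm hne) (fun hvu => huv hvu.symm) hv hvC huC h.symm
  · exact closedNbr_inter_bipartiteCode_ne_of_not_mem hconn (by omega) hs htwin hstar hne huv hu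
      huC hvC h

theorem ncard_bipartiteCode_le :
    (bipartiteCode G s).ncard ≤ (leaves G).ncard + ((leaves G)ᶜ ∩ s).ncard := by
  have hsub : leafOf G '' (supports G ∩ s) ⊆ leaves G :=
    image_subset_iff.mpr fun w hw => isLeaf_leafOf hw.1
  have h₁ := ncard_sdiff_add_ncard_of_subset hsub
  have h₂ := (leafOf_injOn (G := G) |>.mono (inter_subset_left (t := s))).ncard_image
  have h₃ := ncard_image_le (f := nonLeafNbr G) (s := supports G ∩ s)
  have h₄ := ncard_union_le ((leaves G)ᶜ ∩ s ∪ (leaves G \ leafOf G '' (supports G ∩ s)))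
    (nonLeafNbr G '' (supports G ∩ s))
  have h₅ := ncard_union_le ((leaves G)ᶜ ∩ s) (leaves G \ leafOf G '' (supports G ∩ s))
  rw [bipartiteCode]
  omega

end Finite

end BipartiteCode

theorem exists_isIdCode_two_mul_ncard_le [Fintype V] (hconn : G.Connected)
    (hn : 3 ≤ Fintype.card V) (hbip : G.Colorable 2)
    (htwin : ∀ u v : V, u ≠ v → 2 ≤ (G.neighborSet u).ncard →
      2 ≤ (G.neighborSet v).ncard → G.neighborSet u ≠ G.neighborSet v)
    (hstar : ∀ w ∈ supports G, ∃ x, G.Adj w x ∧ ¬IsLeaf G x) :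
    ∃ C : Set V, IsIdCode G C ∧ 2 * C.ncard ≤ Fintype.card V + (leaves G).ncard := by
  obtain ⟨c⟩ := hbip
  set s : Set V := {v | c v = 0}
  have hs : G.IsBipartiteWith s sᶜ := ⟨disjoint_compl_right, fun v w h => by
    have := c.valid h
    simp only [s, mem_compl_iff, mem_ofPred_eq]
    omega⟩
  have hs' : G.IsBipartiteWith sᶜ sᶜᶜ := by
    rw [compl_compl]
    exact hs.symm
  have hsplit := ncard_inter_add_ncard_sdiff_eq_ncard (leaves G)ᶜ s
  have hcompl := ncard_add_ncard_compl (leaves G)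
  rw [sdiff_eq] at hsplit
  rw [Nat.card_eq_fintype_card] at hcompl
  rcases le_total ((leaves G)ᶜ ∩ s).ncard ((leaves G)ᶜ ∩ sᶜ).ncard with h | h
  · have := ncard_bipartiteCode_le (G := G) (s := s)
    exact ⟨_, isIdCode_bipartiteCode hconn hn hs htwin hstar, by omega⟩
  · have := ncard_bipartiteCode_le (G := G) (s := sᶜ)
    exact ⟨_, isIdCode_bipartiteCode hconn hn hs' htwin hstar, by omega⟩

end

theorem stmt_5 {V : Type*} [Fintype V] (G : SimpleGraph V)
    (hconn : G.Connected) (hbip : G.Colorable 2) (hn : 5 ≤ Fintype.card V)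
    (htwin : ∀ u v : V, u ≠ v → 2 ≤ (G.neighborSet u).ncard →
      2 ≤ (G.neighborSet v).ncard →
      G.neighborSet u ≠ G.neighborSet v ∧ closedNbr G u ≠ closedNbr G v) :
    ∃ C : Set V, IsIdCode G C ∧
      (C.ncard : ℝ) ≤
        min (((Fintype.card V : ℝ) + (leaves G).ncard) / 2)
          ((Fintype.card V : ℝ) - (supports G).ncard) := by
  suffices ∃ C : Set V, IsIdCode G C ∧ 2 * C.ncard ≤ Fintype.card V + (leaves G).ncard ∧
      C.ncard + (supports G).ncard ≤ Fintype.card V by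
    obtain ⟨C, hC, h₁, h₂⟩ := this
    refine ⟨C, hC, le_min ?_ ?_⟩
    · rw [le_div_iff₀ two_pos]
      exact_mod_cast (by omega : C.ncard * 2 ≤ Fintype.card V + (leaves G).ncard)
    · rw [le_sub_iff_add_le]
      exact_mod_cast h₂
  by_cases h : (leaves G).ncard + 2 * (supports G).ncard ≤ Fintype.card V
  · have hstar : ∀ w ∈ supports G, ∃ x, G.Adj w x ∧ ¬IsLeaf G x := fun w hw =>
      exists_adj_not_isLeaf hconn (by have := (nonempty_of_mem hw).ncard_pos; omega) w
    obtain ⟨C, hC, hcard⟩ := exists_isIdCode_two_mul_ncard_le hconn (by omega) hbip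
      (fun u v huv hu hv => (htwin u v huv hu hv).1) hstar
    exact ⟨C, hC, hcard, by omega⟩
  · have hcard := ncard_omitLeafCode_add_ncard_supports (G := G)
    exact ⟨_, isIdCode_omitLeafCode hconn hn (hbip.cliqueFree (by norm_num)), by omega,
      hcard.le⟩
end

section
/- For a complete bipartite graph K_{k₁,k₂} with k₁ > k₂ ≥ 2, of order n = k₁ + k₂, the minimum size of an identifying code equals n − 2. -/
open SimpleGraph

/-! An identifying code `C` of `K_{α,β}` misses at most one vertex on each side: if `inl a ∉ C`,
then `N[inl a] ∩ C` is the right-hand part of `C`, independently of `a`. Conversely, deleting one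
vertex `a₀` on the left and `b₀` on the right leaves an identifying code once the left side has at
least three vertices and the right side at least two: two left vertices are separated by whichever
of them is not `a₀`, and a left vertex `inl a` is separated from any right vertex by a left vertex
other than `a` and `a₀`. -/

variable {V α β : Type*}

theorem Set.exists_notMem_of_ncard_lt_natCard {s : Set α} (h : s.ncard < Nat.card α) :
    ∃ c, c ∉ s :=
  Set.nonempty_compl.2 fun hs => (hs ▸ h).ne (Set.ncard_univ α)

theorem Set.ncard_compl_pair_inl_inr [Finite α] [Finite β] (a : α) (b : β) :
    ({Sum.inl a, Sum.inr b} : Set (α ⊕ β))ᶜ.ncard = Nat.card α + Nat.card β - 2 := by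
  rw [Set.ncard_compl, Set.ncard_pair Sum.inl_ne_inr, Nat.card_sum]

theorem mem_closedNbr {G : SimpleGraph V} {v w : V} : w ∈ closedNbr G v ↔ w = v ∨ G.Adj v w :=
  Iff.rfl

section CompleteBipartite

variable {a a' : α} {b b' : β} {C : Set (α ⊕ β)}

@[simp]
theorem inl_mem_closedNbr_inl :
    (Sum.inl a' : α ⊕ β) ∈ closedNbr (completeBipartiteGraph α β) (Sum.inl a) ↔ a' = a := by
  simp [mem_closedNbr]

@[simp]
theorem inr_mem_closedNbr_inl :
    (Sum.inr b : α ⊕ β) ∈ closedNbr (completeBipartiteGraph α β) (Sum.inl a) := by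
  simp [mem_closedNbr]

@[simp]
theorem inl_mem_closedNbr_inr :
    (Sum.inl a : α ⊕ β) ∈ closedNbr (completeBipartiteGraph α β) (Sum.inr b) := by
  simp [mem_closedNbr]

@[simp]
theorem inr_mem_closedNbr_inr :
    (Sum.inr b' : α ⊕ β) ∈ closedNbr (completeBipartiteGraph α β) (Sum.inr b) ↔ b' = b := by
  simp [mem_closedNbr]

theorem IsIdCode.subsingleton_preimage_inl_compl (hC : IsIdCode (completeBipartiteGraph α β) C) :
    (Sum.inl ⁻¹' Cᶜ : Set α).Subsingleton := by
  intro a ha a' ha'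
  refine Sum.inl_injective (hC.2 _ _ (Set.ext ?_))
  rintro (x | y)
  · simp only [Set.mem_inter_iff, inl_mem_closedNbr_inl]
    grind
  · simp

theorem IsIdCode.subsingleton_preimage_inr_compl (hC : IsIdCode (completeBipartiteGraph α β) C) :
    (Sum.inr ⁻¹' Cᶜ : Set β).Subsingleton := by
  intro b hb b' hb'
  refine Sum.inr_injective (hC.2 _ _ (Set.ext ?_))
  rintro (x | y)
  · simp
  · simp only [Set.mem_inter_iff, inr_mem_closedNbr_inr]
    grind

theorem IsIdCode.ncard_compl_le_two [Finite α] [Finite β]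
    (hC : IsIdCode (completeBipartiteGraph α β) C) : Cᶜ.ncard ≤ 2 :=
  calc Cᶜ.ncard
      = (Sum.inl '' (Sum.inl ⁻¹' Cᶜ) ∪ Sum.inr '' (Sum.inr ⁻¹' Cᶜ)).ncard := by
        rw [Set.image_preimage_inl_union_image_preimage_inr]
    _ ≤ (Sum.inl ⁻¹' Cᶜ : Set α).ncard + (Sum.inr ⁻¹' Cᶜ : Set β).ncard :=
        (Set.ncard_union_le _ _).trans (add_le_add Set.ncard_image_le Set.ncard_image_le)
    _ ≤ 1 + 1 :=
        add_le_add (Set.ncard_le_one_iff_subsingleton.2 hC.subsingleton_preimage_inl_compl)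
          (Set.ncard_le_one_iff_subsingleton.2 hC.subsingleton_preimage_inr_compl)

theorem IsIdCode.natCard_sub_two_le_ncard [Finite α] [Finite β]
    (hC : IsIdCode (completeBipartiteGraph α β) C) : Nat.card α + Nat.card β - 2 ≤ C.ncard := by
  have hsum := Set.ncard_add_ncard_compl C
  rw [Nat.card_sum] at hsum
  have := hC.ncard_compl_le_two
  omega

theorem isIdCode_compl_pair (a₀ : α) (b₀ : β) (hα : 2 < Nat.card α) (hβ : 1 < Nat.card β) :
    IsIdCode (completeBipartiteGraph α β) {Sum.inl a₀, Sum.inr b₀}ᶜ := by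
  have third_left (a : α) : ∃ c, c ≠ a₀ ∧ c ≠ a := by
    simpa [not_or] using Set.exists_notMem_of_ncard_lt_natCard (s := {a₀, a})
      ((Set.ncard_insert_le _ _).trans_lt (by simpa))
  refine ⟨?_, ?_⟩
  · rintro (a | b)
    · obtain ⟨b, hb⟩ := Set.exists_notMem_of_ncard_lt_natCard (s := {b₀}) (by simpa)
      exact ⟨Sum.inr b, by simpa using hb⟩
    · obtain ⟨a, ha, -⟩ := third_left a₀
      exact ⟨Sum.inl a, by simpa using ha⟩
  · rintro (a | b) (a' | b') h <;> have mem_iff := Set.ext_iff.1 h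
    · have h₁ : a ≠ a₀ → a = a' := by simpa using mem_iff (Sum.inl a)
      have h₂ : a' ≠ a₀ → a' = a := by simpa using (mem_iff (Sum.inl a')).symm
      rw [Sum.inl.injEq]
      grind
    · obtain ⟨c, hc₀, hc⟩ := third_left a
      simpa [hc₀, hc] using mem_iff (Sum.inl c)
    · obtain ⟨c, hc₀, hc⟩ := third_left a'
      simpa [hc₀, hc] using mem_iff (Sum.inl c)
    · have h₁ : b ≠ b₀ → b = b' := by simpa using mem_iff (Sum.inr b)
      have h₂ : b' ≠ b₀ → b' = b := by simpa using (mem_iff (Sum.inr b')).symm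
      rw [Sum.inr.injEq]
      grind

end CompleteBipartite

theorem stmt_19 (k1 k2 : ℕ) (h1 : k1 > k2) (h2 : 2 ≤ k2) :
    IsLeast {m : ℕ | ∃ C : Set (Fin k1 ⊕ Fin k2),
        IsIdCode (completeBipartiteGraph (Fin k1) (Fin k2)) C ∧ C.ncard = m}
      (k1 + k2 - 2) := by
  have hα : 2 < Nat.card (Fin k1) := by simp; omega
  have hβ : 1 < Nat.card (Fin k2) := by simp; omega
  let a₀ : Fin k1 := ⟨0, by omega⟩
  let b₀ : Fin k2 := ⟨0, by omega⟩
  refine ⟨⟨_, isIdCode_compl_pair a₀ b₀ hα hβ, ?_⟩, ?_⟩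
  · simpa using Set.ncard_compl_pair_inl_inr a₀ b₀
  · rintro m ⟨C, hC, rfl⟩
    simpa using hC.natCard_sub_two_le_ncard
end
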